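/- Let M be a compact C² submanifold of ℝ^D with reach τ(M) > 0, let A ⊆ M, and let t ≥ 0. Then the asymmetric Hausdorff distance from the t-convex hull Conv(t, A) to M satisfies d_H(Conv(t, A) | M) ≤ (t²/(2τ(M)))·min(1 + t²/τ(M)², 2) ≤ t²/τ(M). -/

import Mathlib

open Metric Set

noncomputable section

variable {D d : ℕ}

/-- Radius of the smallest enclosing ball of a set: infimum over centers `z` of the
smallest `r` with `σ ⊆ closedBall z r`. -/
def sebRadius (σ : Set (EuclideanSpace ℝ (Fin D))) : ℝ :=
  sInf {r : ℝ | ∃ z : EuclideanSpace ℝ (Fin D), σ ⊆ Metric.closedBall z r}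

/-- The `t`-convex hull `Conv(t, A) = ⋃ {Conv σ : σ ⊆ A, r(σ) ≤ t}`. -/
def tConv (t : ℝ) (A : Set (EuclideanSpace ℝ (Fin D))) : Set (EuclideanSpace ℝ (Fin D)) :=
  ⋃ σ ∈ {σ : Set (EuclideanSpace ℝ (Fin D)) | σ ⊆ A ∧ sebRadius σ ≤ t}, convexHull ℝ σ

/-- The convexity defect function `h(t, A) = d_H(Conv(t,A), A)`. -/
def convDefect (t : ℝ) (A : Set (EuclideanSpace ℝ (Fin D))) : ℝ :=
  Metric.hausdorffDist (tConv t A) A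

/-- `Rad(A) = {r(σ) : σ ⊆ A}`. -/
def radSet (A : Set (EuclideanSpace ℝ (Fin D))) : Set ℝ :=
  {r : ℝ | ∃ σ ⊆ A, sebRadius σ = r}

/-- `t_λ(A) = inf {t ∈ Rad(A) : h(t,A) ≤ λ t}`. -/
def tSel (lam : ℝ) (A : Set (EuclideanSpace ℝ (Fin D))) : ℝ :=
  sInf {t : ℝ | t ∈ radSet A ∧ convDefect t A ≤ lam * t}

/-- `x` has a unique metric projection onto `M`. -/
def uniqueProj (M : Set (EuclideanSpace ℝ (Fin D))) (x : EuclideanSpace ℝ (Fin D)) : Prop :=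
  ∃! y, y ∈ M ∧ dist x y = Metric.infDist x M

/-- The reach of a set `M`: the largest `r` such that every point at distance `< r` from `M`
has a unique nearest point on `M`. -/
def reach (M : Set (EuclideanSpace ℝ (Fin D))) : ℝ :=
  sSup {r : ℝ | ∀ x : EuclideanSpace ℝ (Fin D), Metric.infDist x M < r → uniqueProj M x}

open Classical in
/-- The metric projection onto `M` (an arbitrary nearest point, when one exists). -/
def projOn (M : Set (EuclideanSpace ℝ (Fin D))) (x : EuclideanSpace ℝ (Fin D)) :
    EuclideanSpace ℝ (Fin D) :=
  if h : ∃ y, y ∈ M ∧ dist x y = Metric.infDist x M then h.choose else x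

/-- `t*(A) = inf {s < τ(M) : π_M(Conv(s,A)) = M}`. -/
def tStar (A M : Set (EuclideanSpace ℝ (Fin D))) : ℝ :=
  sInf {s : ℝ | s < reach M ∧ projOn M '' tConv s A = M}

/-- The approximation rate `ε(A) = sup {d(x, A) : x ∈ M}`. -/
def epsRate (M A : Set (EuclideanSpace ℝ (Fin D))) : ℝ :=
  sSup ((fun x => Metric.infDist x A) '' M)

/-- `M ⊆ ℝ^D` is a `d`-dimensional `C²` submanifold: around each of its points, `M` is the
image of an injective `C²` immersion from an open subset of `ℝ^d`. -/
def IsC2Submanifold (d : ℕ) (M : Set (EuclideanSpace ℝ (Fin D))) : Prop :=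
  ∀ x ∈ M, ∃ (φ : EuclideanSpace ℝ (Fin d) → EuclideanSpace ℝ (Fin D))
    (u : Set (EuclideanSpace ℝ (Fin d))) (V : Set (EuclideanSpace ℝ (Fin D))),
      IsOpen u ∧ (0 : EuclideanSpace ℝ (Fin d)) ∈ u ∧ φ 0 = x ∧ IsOpen V ∧ x ∈ V ∧
      ContDiffOn ℝ 2 φ u ∧ Set.InjOn φ u ∧ φ '' u = M ∩ V ∧
      ∀ y ∈ u, Function.Injective (fderiv ℝ φ y)

/-- The set of tangent vectors to `M` at `x`, realized as velocities of curves in `M`. -/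
def tangentVectorsAt (M : Set (EuclideanSpace ℝ (Fin D))) (x : EuclideanSpace ℝ (Fin D)) :
    Set (EuclideanSpace ℝ (Fin D)) :=
  {v | ∃ γ : ℝ → EuclideanSpace ℝ (Fin D), (∀ s, γ s ∈ M) ∧ γ 0 = x ∧ HasDerivAt γ v 0}

/-!
Let `y ∈ Conv σ` with `σ ⊆ M ∩ B(z, r)`, let `δ = d(y, M) < τ(M)` and let `m` be a nearest point of
`y` on `M`, with unit normal `n = (y - m) / δ`. Federer's normal-ray property says that
`c = m + θ n` is at distance exactly `θ` from `M` for every `θ ∈ [δ, τ(M))`, so `σ` avoids the open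
ball `B(c, θ)`. As `‖x - c‖² - ‖x - z‖²` is affine in `x`, the bound `θ² - r²` it obeys on `σ`
passes to `y`, giving `2θδ ≤ r² + δ²`; letting `θ → τ(M)` and `r → t` yields `2τδ ≤ t² + δ²`, i.e.
`δ ≤ τ - √(τ² - t²) ≤ (t² / 2τ)(1 + t² / τ²)`. When `t ≥ τ` the bound `δ ≤ t` suffices.

The normal-ray property is proved with the convex function `(‖x‖² - d(x, M)²) / 2`: its
subgradients at points within the reach are exactly the (unique) nearest points, and Minty's
surjectivity of `id + ∂f` lets one push the ray forward step by step.
-/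

open RealInnerProductSpace Filter Topology

theorem IsCompact.exists_pos_forall_nearest_dist_lt {α : Type*} [PseudoMetricSpace α]
    {M : Set α} (hM : IsCompact M) {y m : α} (hm : ∀ a ∈ M, infDist y M = dist y a → a = m)
    {η : ℝ} (hη : 0 < η) :
    ∃ ρ > 0, ∀ x, dist x y < ρ → ∀ a ∈ M, infDist x M = dist x a → dist a m < η := by
  have hK : IsCompact (M ∩ {a | η ≤ dist a m}) :=
    hM.inter_right (isClosed_le continuous_const (continuous_id.dist continuous_const))
  obtain ⟨c, hc, hcK⟩ := hK.exists_forall_le' (continuous_const.dist continuous_id).continuousOn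
    fun a ⟨haM, ham⟩ => (infDist_le_dist_of_mem haM).lt_of_ne fun h => by
      rw [hm a haM h] at ham
      exact hη.not_ge (by simpa using ham)
  refine ⟨(c - infDist y M) / 2, by linarith, fun x hx a haM hxa => ?_⟩
  by_contra! ham
  have h1 : c ≤ dist y a := hcK a ⟨haM, ham⟩
  have h2 : infDist x M ≤ infDist y M + dist x y := infDist_le_infDist_add_dist
  have h3 := dist_triangle y x a
  rw [dist_comm y x, ← hxa] at h3
  linarith

section ConvexPotential

variable {E : Type*} [NormedAddCommGroup E]

-- `(‖x‖² - d(x, M)²) / 2 = sup_{a ∈ M} (⟪x, a⟫ - ‖a‖² / 2)`, a supremum of affine functions of `x`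
def convexPotential (M : Set E) (x : E) : ℝ :=
  (‖x‖ ^ 2 - infDist x M ^ 2) / 2

variable {M : Set E}

theorem continuous_convexPotential : Continuous (convexPotential M) :=
  ((continuous_norm.pow 2).sub ((continuous_infDist_pt M).pow 2)).div_const 2

variable [InnerProductSpace ℝ E]

def HasSubgradientAt (f : E → ℝ) (p y : E) : Prop :=
  ∀ w, f y + ⟪p, w - y⟫ ≤ f w

theorem HasSubgradientAt.inner_sub_nonneg {f : E → ℝ} {p q x y : E}
    (hp : HasSubgradientAt f p y) (hq : HasSubgradientAt f q x) : 0 ≤ ⟪p - q, y - x⟫ := by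
  have h1 := hp x
  have h2 := hq y
  rw [← neg_sub x y, inner_neg_right] at h2
  rw [inner_sub_left, ← neg_sub x y, inner_neg_right, inner_neg_right]
  linarith

theorem ConvexOn.hasSubgradientAt_of_forall_le {f : E → ℝ} (hf : ConvexOn ℝ univ f) {y z : E}
    (hy : ∀ w, f y + ‖y - z‖ ^ 2 / 2 ≤ f w + ‖w - z‖ ^ 2 / 2) :
    HasSubgradientAt f (z - y) y := by
  intro w
  have key : ∀ t ∈ Ioc (0 : ℝ) 1, f y + ⟪z - y, w - y⟫ - f w ≤ t * (‖w - y‖ ^ 2 / 2) := by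
    rintro t ⟨ht0, ht1⟩
    have hconv := hf.2 (mem_univ y) (mem_univ w) (sub_nonneg.2 ht1) ht0.le (by ring)
    have hmin := hy ((1 - t) • y + t • w)
    have hpt : (1 - t) • y + t • w - z = (y - z) + t • (w - y) := by module
    rw [hpt, norm_add_sq_real, inner_smul_right, norm_smul, Real.norm_eq_abs, abs_of_pos ht0,
      ← neg_sub z y, inner_neg_left] at hmin
    rw [smul_eq_mul, smul_eq_mul] at hconv
    nlinarith
  have hlim : Tendsto (fun t : ℝ => t * (‖w - y‖ ^ 2 / 2)) (𝓝[>] 0) (𝓝 0) := by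
    have h := ((continuous_mul_const (‖w - y‖ ^ 2 / 2)).tendsto 0).mono_left
      (nhdsWithin_le_nhds (s := Ioi 0))
    rwa [zero_mul] at h
  have := ge_of_tendsto hlim (mem_of_superset (Ioc_mem_nhdsGT one_pos) key)
  linarith

theorem inner_sub_le_convexPotential {a : E} (x : E) (ha : a ∈ M) :
    ⟪x, a⟫ - ‖a‖ ^ 2 / 2 ≤ convexPotential M x := by
  have h := pow_le_pow_left₀ infDist_nonneg (infDist_le_dist_of_mem (x := x) ha) 2
  rw [dist_eq_norm, norm_sub_sq_real] at h
  rw [convexPotential]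
  linarith

theorem convexPotential_eq_of_infDist_eq {a x : E} (h : infDist x M = dist x a) :
    convexPotential M x = ⟪x, a⟫ - ‖a‖ ^ 2 / 2 := by
  rw [convexPotential, h, dist_eq_norm, norm_sub_sq_real]
  ring

theorem hasSubgradientAt_convexPotential {a x : E} (ha : a ∈ M) (h : infDist x M = dist x a) :
    HasSubgradientAt (convexPotential M) a x := by
  intro w
  have := inner_sub_le_convexPotential w ha
  rw [convexPotential_eq_of_infDist_eq h, inner_sub_right, real_inner_comm w a,
    real_inner_comm x a]
  linarith

theorem convexOn_convexPotential (hM : IsCompact M) (hne : M.Nonempty) :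
    ConvexOn ℝ univ (convexPotential M) := by
  refine ⟨convex_univ, fun x _ y _ μ ν hμ hν hμν => ?_⟩
  obtain ⟨c, hc, hdc⟩ := hM.exists_infDist_eq_dist hne (μ • x + ν • y)
  rw [convexPotential_eq_of_infDist_eq hdc, smul_eq_mul, smul_eq_mul, inner_add_left,
    real_inner_smul_left, real_inner_smul_left]
  linear_combination mul_le_mul_of_nonneg_left (inner_sub_le_convexPotential x hc) hμ +
    mul_le_mul_of_nonneg_left (inner_sub_le_convexPotential y hc) hν + (‖c‖ ^ 2 / 2) * hμν

-- Minty: `id + ∂(convexPotential M)` is onto, `y` being the proximal point of `z`.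
theorem exists_hasSubgradientAt_convexPotential [ProperSpace E] (hM : IsCompact M)
    (hne : M.Nonempty) (z : E) : ∃ y, HasSubgradientAt (convexPotential M) (z - y) y := by
  obtain ⟨a, ha⟩ := hne
  have hcoer : Tendsto (fun w => convexPotential M w + ‖w - z‖ ^ 2 / 2) (cocompact E) atTop := by
    refine tendsto_atTop_mono (fun w => ?_) (tendsto_atTop_add_const_right _ (⟪z, a⟫ - ‖a‖ ^ 2)
      (((tendsto_pow_atTop two_ne_zero).comp
        (tendsto_dist_right_cocompact_atTop (z - a))).atTop_div_const two_pos))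
    have h := inner_sub_le_convexPotential w ha
    have e : ‖w - (z - a)‖ ^ 2 = ‖w - z‖ ^ 2 + 2 * ⟪w, a⟫ - 2 * ⟪z, a⟫ + ‖a‖ ^ 2 := by
      rw [sub_sub_eq_add_sub, add_sub_right_comm, norm_add_sq_real, inner_sub_left]
      ring
    simp only [Function.comp_apply, dist_eq_norm]
    linarith
  obtain ⟨y, hy⟩ := ((continuous_convexPotential).add
    ((continuous_id.sub continuous_const).norm.pow 2 |>.div_const 2)).exists_forall_le hcoer
  exact ⟨y, (convexOn_convexPotential hM ⟨a, ha⟩).hasSubgradientAt_of_forall_le hy⟩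

theorem eq_of_hasSubgradientAt_convexPotential (hM : IsCompact M) (hne : M.Nonempty)
    {y m p : E} (hm : ∀ a ∈ M, infDist y M = dist y a → a = m)
    (hp : HasSubgradientAt (convexPotential M) p y) : p = m := by
  by_contra hpm
  set v := p - m
  have hv : 0 < ‖v‖ := norm_pos_iff.2 (sub_ne_zero.2 hpm)
  obtain ⟨ρ, hρ, hnear⟩ := hM.exists_pos_forall_nearest_dist_lt hm hv
  set t := ρ / (2 * ‖v‖)
  have ht : 0 < t := by positivity
  obtain ⟨a, haM, hxa⟩ := hM.exists_infDist_eq_dist hne (y + t • v)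
  have ham : ‖a - m‖ < ‖v‖ := by
    refine dist_eq_norm a m ▸ hnear _ ?_ a haM hxa
    have htv : t * ‖v‖ = ρ / 2 := by rw [div_mul_eq_mul_div, mul_div_mul_right _ _ hv.ne']
    rw [dist_eq_norm, add_sub_cancel_left, norm_smul, Real.norm_of_nonneg ht.le, htv]
    linarith
  have hpa : ⟪p - a, v⟫ ≤ 0 := by
    have h1 := hp (y + t • v)
    rw [convexPotential_eq_of_infDist_eq hxa, add_sub_cancel_left, inner_smul_right,
      inner_add_left, real_inner_smul_left, real_inner_comm a v] at h1
    have h2 := inner_sub_le_convexPotential y haM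
    rw [inner_sub_left]
    nlinarith
  have hsplit : ‖v‖ ^ 2 = ⟪p - a, v⟫ + ⟪a - m, v⟫ := by
    rw [← inner_add_left, sub_add_sub_cancel, real_inner_self_eq_norm_sq]
  have hcs : ⟪a - m, v⟫ ≤ ‖a - m‖ * ‖v‖ := real_inner_le_norm _ _
  nlinarith

/-- `‖x - c‖² - ‖x - z‖²` is affine in `x`, so its lower bound `d(c, M)² - r²` on `σ` persists on
the convex hull. -/
theorem infDist_sq_le_of_mem_convexHull {σ : Set E} (hσM : σ ⊆ M) {y z : E} {r : ℝ}
    (hσ : σ ⊆ closedBall z r) (hy : y ∈ convexHull ℝ σ) (c : E) :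
    infDist c M ^ 2 ≤ r ^ 2 + dist c y ^ 2 := by
  set k := infDist c M ^ 2 - r ^ 2 - ‖c‖ ^ 2 + ‖z‖ ^ 2 with hk
  have hlin : IsLinearMap ℝ fun x : E => 2 * ⟪x, z - c⟫ :=
    ⟨fun a b => by rw [inner_add_left, mul_add], fun a x => by
      rw [real_inner_smul_left, smul_eq_mul]; ring⟩
  have hhalf : σ ⊆ {x | k ≤ 2 * ⟪x, z - c⟫} := fun a ha => by
    have h1 := pow_le_pow_left₀ infDist_nonneg (infDist_le_dist_of_mem (x := c) (hσM ha)) 2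
    have h2 := pow_le_pow_left₀ dist_nonneg (mem_closedBall.1 (hσ ha)) 2
    rw [dist_comm, dist_eq_norm, norm_sub_sq_real] at h1
    rw [dist_eq_norm, norm_sub_sq_real] at h2
    rw [mem_ofPred_eq, inner_sub_right, hk]
    linarith
  have hyk := convexHull_min hhalf (convex_halfSpace_ge hlin k) hy
  have h := sq_nonneg (dist y z)
  rw [mem_ofPred_eq, inner_sub_right, hk] at hyk
  rw [dist_eq_norm, norm_sub_sq_real] at h
  rw [dist_comm, dist_eq_norm, norm_sub_sq_real]
  linarith

theorem infDist_le_of_mem_convexHull {σ : Set E} (hσM : σ ⊆ M) {y z : E} {r : ℝ}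
    (hσ : σ ⊆ closedBall z r) (hy : y ∈ convexHull ℝ σ) : infDist y M ≤ r := by
  have hr : 0 ≤ r := dist_nonneg.trans (hσ (convexHull_nonempty_iff.1 ⟨y, hy⟩).some_mem)
  have h := infDist_sq_le_of_mem_convexHull hσM hσ hy y
  rw [dist_self, zero_pow two_ne_zero, add_zero] at h
  exact (pow_le_pow_iff_left₀ infDist_nonneg hr two_ne_zero).1 h

end ConvexPotential

section Reach

variable {M : Set (EuclideanSpace ℝ (Fin D))}

theorem uniqueProj_of_infDist_lt_reach {x : EuclideanSpace ℝ (Fin D)}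
    (hx : infDist x M < reach M) : uniqueProj M x := by
  obtain ⟨r, hr, hxr⟩ := exists_lt_of_lt_csSup ⟨0, fun x hx => absurd hx infDist_nonneg.not_gt⟩ hx
  exact hr x hxr

theorem nearest_of_hasSubgradientAt_convexPotential (hM : IsCompact M) (hne : M.Nonempty)
    {y p : EuclideanSpace ℝ (Fin D)} (hy : infDist y M < reach M)
    (hp : HasSubgradientAt (convexPotential M) p y) : p ∈ M ∧ infDist y M = dist y p := by
  obtain ⟨m, hm, hym⟩ := hM.exists_infDist_eq_dist hne y
  obtain ⟨c, -, hc⟩ := uniqueProj_of_infDist_lt_reach hy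
  have huniq : ∀ a ∈ M, infDist y M = dist y a → a = m := fun a ha hya =>
    (hc a ⟨ha, hya.symm⟩).trans (hc m ⟨hm, hym.symm⟩).symm
  rw [eq_of_hasSubgradientAt_convexPotential hM hne huniq hp]
  exact ⟨hm, hym⟩

/-- Minty gives `y` with `m + (s + ε) n + m - y ∈ ∂f(y)`. Monotonicity of `∂f` against the
subgradient `m` at `m + s n`, together with `d(m + s n, M) = s`, forces `y = m + (s + ε) n`; its
subgradient `m` is then its nearest point. -/
theorem infDist_add_smul_eq_add_of_eq (hM : IsCompact M) {m n : EuclideanSpace ℝ (Fin D)}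
    {s ε : ℝ} (hm : m ∈ M) (hn : ‖n‖ = 1) (hs : infDist (m + s • n) M = s) (hε : 0 < ε)
    (hεs : ε < 2 * s) (hR : s + 2 * ε < reach M) :
    infDist (m + (s + ε) • n) M = s + ε := by
  have hne : M.Nonempty := ⟨m, hm⟩
  obtain ⟨y, hy⟩ := exists_hasSubgradientAt_convexPotential hM hne (m + (s + ε) • n + m)
  obtain ⟨u, rfl⟩ : ∃ u, y = m + (s + ε) • n + u := ⟨y - (m + (s + ε) • n), by abel⟩
  rw [show m + (s + ε) • n + m - (m + (s + ε) • n + u) = m - u by abel] at hy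
  have hnorm_smul : ∀ r : ℝ, 0 ≤ r → ‖r • n‖ = r := fun r hr => by
    rw [norm_smul, hn, mul_one, Real.norm_of_nonneg hr]
  have hsm : infDist (m + s • n) M = dist (m + s • n) m := by
    rw [hs, dist_eq_norm, add_sub_cancel_left, hnorm_smul s (by linarith)]
  have hmono : ε * ⟪u, n⟫ + ‖u‖ ^ 2 ≤ 0 := by
    have h := hy.inner_sub_nonneg (hasSubgradientAt_convexPotential hm hsm)
    rw [show m - u - m = -u by abel, show m + (s + ε) • n + u - (m + s • n) = ε • n + u by module,
      inner_neg_left, inner_add_right, real_inner_smul_right, real_inner_self_eq_norm_sq] at h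
    linarith
  have hu : ‖u‖ ≤ ε := by
    have hcs : |⟪u, n⟫| ≤ ‖u‖ := by simpa [hn] using abs_real_inner_le_norm u n
    nlinarith [neg_abs_le ⟪u, n⟫, norm_nonneg u]
  have hyR : infDist (m + (s + ε) • n + u) M < reach M := by
    have h := infDist_le_dist_of_mem (x := m + (s + ε) • n + u) hm
    rw [dist_eq_norm, show m + (s + ε) • n + u - m = (s + ε) • n + u by abel] at h
    have := norm_add_le ((s + ε) • n) u
    rw [hnorm_smul _ (by linarith)] at this
    linarith
  obtain ⟨hpM, hyp⟩ := nearest_of_hasSubgradientAt_convexPotential hM hne hyR hy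
  have hfar : 0 ≤ 2 * s * ⟪u, n⟫ + ‖u‖ ^ 2 := by
    have h := infDist_le_dist_of_mem (x := m + s • n) hpM
    rw [hs, dist_eq_norm, show m + s • n - (m - u) = s • n + u by abel] at h
    have h2 := pow_le_pow_left₀ (by linarith) h 2
    rw [norm_add_sq_real, real_inner_smul_left, hnorm_smul s (by linarith),
      real_inner_comm] at h2
    linarith
  have hu0 : u = 0 := by
    have : (2 * s - ε) * ‖u‖ ^ 2 ≤ 0 := by nlinarith
    exact norm_eq_zero.1 (pow_eq_zero_iff two_ne_zero |>.1
      (le_antisymm (nonpos_of_mul_nonpos_right this (by linarith)) (sq_nonneg _)))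
  subst hu0
  rw [add_zero, sub_zero] at hyp
  rw [hyp, dist_eq_norm, add_sub_cancel_left, hnorm_smul _ (by linarith)]

theorem infDist_add_smul_eq_of_lt_reach (hM : IsCompact M) {m n : EuclideanSpace ℝ (Fin D)}
    {δ θ : ℝ} (hm : m ∈ M) (hn : ‖n‖ = 1) (hδ : 0 < δ) (hδM : infDist (m + δ • n) M = δ)
    (hδθ : δ ≤ θ) (hθ : θ < reach M) : infDist (m + θ • n) M = θ := by
  set S := {s : ℝ | infDist (m + s • n) M = s}
  have hS : IsClosed S :=
    isClosed_eq ((continuous_infDist_pt M).comp (by fun_prop)) continuous_id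
  refine (hS.inter isClosed_Icc).Icc_subset_of_forall_exists_gt hδM
    (fun s ⟨hs, hδs, hsθ⟩ b hb => ?_) ⟨hδθ, le_rfl⟩
  set ε := min (b - s) (min s ((reach M - s) / 3))
  have hε : 0 < ε := lt_min (sub_pos.2 hb) (lt_min (by linarith) (by linarith))
  have hεb : ε ≤ b - s := min_le_left _ _
  have hεs : ε ≤ s := (min_le_right _ _).trans (min_le_left _ _)
  have hεR : ε ≤ (reach M - s) / 3 := (min_le_right _ _).trans (min_le_right _ _)
  exact ⟨s + ε, infDist_add_smul_eq_add_of_eq hM hm hn hs hε (by linarith) (by linarith),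
    by linarith, by linarith⟩

theorem exists_subset_closedBall_of_sebRadius_lt {σ : Set (EuclideanSpace ℝ (Fin D))}
    (hσ : Bornology.IsBounded σ) {r : ℝ} (hr : sebRadius σ < r) : ∃ z, σ ⊆ closedBall z r := by
  rcases σ.eq_empty_or_nonempty with rfl | ⟨a, ha⟩
  · exact ⟨0, empty_subset _⟩
  obtain ⟨R, hR⟩ := hσ.subset_closedBall 0
  have hbdd : BddBelow {s : ℝ | ∃ z : EuclideanSpace ℝ (Fin D), σ ⊆ closedBall z s} :=
    ⟨0, fun s ⟨z, hz⟩ => dist_nonneg.trans (hz ha)⟩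
  obtain ⟨s, ⟨z, hz⟩, hsr⟩ := (csInf_lt_iff hbdd ⟨R, 0, hR⟩).1 hr
  exact ⟨z, hz.trans (closedBall_subset_closedBall hsr.le)⟩

theorem exists_subset_closedBall_of_mem_tConv {A : Set (EuclideanSpace ℝ (Fin D))}
    (hA : Bornology.IsBounded A) {t : ℝ} {y : EuclideanSpace ℝ (Fin D)} (hy : y ∈ tConv t A) :
    ∃ σ ⊆ A, y ∈ convexHull ℝ σ ∧ ∀ r > t, ∃ z, σ ⊆ closedBall z r := by
  simp only [tConv, mem_iUnion, mem_ofPred_eq, exists_prop] at hy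
  obtain ⟨σ, ⟨hσA, hσt⟩, hyσ⟩ := hy
  exact ⟨σ, hσA, hyσ, fun r hr =>
    exists_subset_closedBall_of_sebRadius_lt (hA.subset hσA) (hσt.trans_lt hr)⟩

theorem two_mul_reach_mul_infDist_le {M σ : Set (EuclideanSpace ℝ (Fin D))} (hM : IsCompact M)
    (hσM : σ ⊆ M) {y z : EuclideanSpace ℝ (Fin D)} {r : ℝ} (hσ : σ ⊆ closedBall z r)
    (hy : y ∈ convexHull ℝ σ) (hyR : infDist y M < reach M) :
    2 * reach M * infDist y M ≤ r ^ 2 + infDist y M ^ 2 := by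
  set δ := infDist y M
  rcases (infDist_nonneg : 0 ≤ δ).eq_or_lt with hδ | hδ
  · rw [show δ = 0 from hδ.symm, mul_zero, zero_pow two_ne_zero, add_zero]
    positivity
  have hne : M.Nonempty := (convexHull_nonempty_iff.1 ⟨y, hy⟩).mono hσM
  obtain ⟨m, hm, hym⟩ := hM.exists_infDist_eq_dist hne y
  set n := δ⁻¹ • (y - m)
  have hyn : y = m + δ • n := by
    rw [smul_smul, mul_inv_cancel₀ hδ.ne', one_smul, add_sub_cancel]
  have hn : ‖n‖ = 1 := by
    rw [norm_smul, norm_inv, Real.norm_of_nonneg hδ.le, ← dist_eq_norm, ← hym,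
      inv_mul_cancel₀ hδ.ne']
  have key : ∀ θ ∈ Ico δ (reach M), 2 * θ * δ ≤ r ^ 2 + δ ^ 2 := by
    rintro θ ⟨hδθ, hθR⟩
    have hθ := infDist_add_smul_eq_of_lt_reach hM hm hn hδ (hyn ▸ rfl) hδθ hθR
    have h := infDist_sq_le_of_mem_convexHull hσM hσ hy (m + θ • n)
    rw [hθ, hyn, dist_eq_norm, show m + θ • n - (m + δ • n) = (θ - δ) • n by module,
      norm_smul, hn, mul_one, Real.norm_of_nonneg (by linarith)] at h
    linarith
  have hlim : Tendsto (fun θ => 2 * θ * δ) (𝓝[<] reach M) (𝓝 (2 * reach M * δ)) :=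
    ((by fun_prop : Continuous fun θ : ℝ => 2 * θ * δ).tendsto _).mono_left nhdsWithin_le_nhds
  exact le_of_tendsto hlim (mem_of_superset (Ico_mem_nhdsLT hyR) key)

end Reach

theorem le_sq_div_mul_min {τ t δ : ℝ} (hτ : 0 < τ) (hδ : 0 ≤ δ) (hδt : δ ≤ t)
    (h : t < τ → 2 * τ * δ ≤ t ^ 2 + δ ^ 2) :
    δ ≤ t ^ 2 / (2 * τ) * min (1 + t ^ 2 / τ ^ 2) 2 := by
  rcases lt_or_ge t τ with htτ | hτt
  · obtain ⟨u, hu⟩ : ∃ u, u = t ^ 2 / τ ^ 2 := ⟨_, rfl⟩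
    have htu : t ^ 2 = τ ^ 2 * u := by rw [hu]; field_simp
    have hu0 : 0 ≤ u := hu ▸ by positivity
    have hu1 : u < 1 := hu ▸ (div_lt_one (by positivity)).2 (by nlinarith)
    have hB : t ^ 2 / (2 * τ) * (1 + u) = τ * u * (1 + u) / 2 := by
      rw [htu]; field_simp
    rw [← hu, min_eq_left (by linarith), hB]
    -- `x² - 2τx + t²` is `≥ 0` at `δ` but `≤ 0` at `τ u (1 + u) / 2`, both left of its vertex `τ`
    have hq := h htτ
    by_contra! hlt
    nlinarith [mul_pos (sub_pos.2 hlt) (show 0 < 2 * τ - δ - τ * u * (1 + u) / 2 by nlinarith),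
      mul_nonneg (mul_nonneg hτ.le hτ.le) (mul_nonneg (mul_nonneg hu0 hu0)
        (mul_nonneg (sub_nonneg.2 hu1.le) (by linarith : (0:ℝ) ≤ u + 3)))]
  · have h2 : t ^ 2 / (2 * τ) * 2 = t ^ 2 / τ := by field_simp
    rw [min_eq_right (by linarith [(one_le_div (by positivity)).2 (pow_le_pow_left₀ hτ.le hτt 2)]),
      h2, le_div_iff₀ hτ]
    nlinarith

theorem tConv_close_to_manifold_general {D : ℕ} (M : Set (EuclideanSpace ℝ (Fin D)))
    (hMc : IsCompact M) (hτ : 0 < reach M)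
    (A : Set (EuclideanSpace ℝ (Fin D))) (hA : A ⊆ M) (t : ℝ) :
    (∀ y ∈ tConv t A,
      Metric.infDist y M ≤ t ^ 2 / (2 * reach M) * min (1 + t ^ 2 / reach M ^ 2) 2) ∧
    t ^ 2 / (2 * reach M) * min (1 + t ^ 2 / reach M ^ 2) 2 ≤ t ^ 2 / reach M := by
  refine ⟨fun y hy => ?_, ?_⟩
  · obtain ⟨σ, hσA, hyσ, hball⟩ :=
      exists_subset_closedBall_of_mem_tConv (hMc.isBounded.subset hA) hy
    have hσM := hσA.trans hA
    have hδt : infDist y M ≤ t := le_of_forall_gt_imp_ge_of_dense fun r hr =>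
      let ⟨_, hz⟩ := hball r hr
      infDist_le_of_mem_convexHull hσM hz hyσ
    refine le_sq_div_mul_min hτ infDist_nonneg hδt fun htτ => ?_
    have hlim : Tendsto (fun r => r ^ 2 + infDist y M ^ 2) (𝓝[>] t) (𝓝 (t ^ 2 + infDist y M ^ 2)) :=
      ((by fun_prop : Continuous fun r : ℝ => r ^ 2 + infDist y M ^ 2).tendsto _).mono_left
        nhdsWithin_le_nhds
    refine ge_of_tendsto hlim (eventually_nhdsWithin_of_forall fun r hr => ?_)
    obtain ⟨z, hz⟩ := hball r hr
    exact two_mul_reach_mul_infDist_le hMc hσM hz hyσ (hδt.trans_lt htτ)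
  · calc t ^ 2 / (2 * reach M) * min (1 + t ^ 2 / reach M ^ 2) 2
        ≤ t ^ 2 / (2 * reach M) * 2 := by gcongr; exact min_le_right _ _
      _ = t ^ 2 / reach M := by field_simp

/-- For `A ⊆ M` and `t ≥ 0`,
`d_H(Conv(t,A) | M) ≤ (t²/(2τ(M))) · min(1 + t²/τ(M)², 2) ≤ t²/τ(M)`. -/
theorem tConv_close_to_manifold {D d : ℕ} (M : Set (EuclideanSpace ℝ (Fin D)))
    (hMc : IsCompact M) (hM : IsC2Submanifold d M) (hτ : 0 < reach M)
    (A : Set (EuclideanSpace ℝ (Fin D))) (hA : A ⊆ M) (t : ℝ) (ht : 0 ≤ t) :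
    (∀ y ∈ tConv t A,
      Metric.infDist y M ≤ t ^ 2 / (2 * reach M) * min (1 + t ^ 2 / reach M ^ 2) 2) ∧
    t ^ 2 / (2 * reach M) * min (1 + t ^ 2 / reach M ^ 2) 2 ≤ t ^ 2 / reach M :=
  tConv_close_to_manifold_general M hMc hτ A hA t
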